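/- arXiv:1408.5084 — 9 statements merged into one kernel-verified Lean document; each statement's English description precedes it below -/
import Mathlib

section
/- Let α be a non-zero algebraic number that is not a root of unity. Then M_∞(α) ≥ inf{H(γ) : γ ∈ ℚ(α) and H(γ) > 1}, where H is the absolute Weil height and M_∞ is the strong (non-Archimedean) metric Mahler measure. -/
open Polynomial

noncomputable section

local notation "K" => AlgebraicClosure ℚ

/-- The leading coefficient of the primitive integer minimal polynomial of `α`,
i.e. the lcm of the denominators of the coefficients of `minpoly ℚ α`. -/
def primLead (α : K) : ℕ :=
  (minpoly ℚ α).support.lcm fun i => ((minpoly ℚ α).coeff i).den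

/-- The Mahler measure `M(α)`: the leading coefficient of the integer minimal polynomial
of `α` times the product of `max 1 |z|` over the complex roots `z` of the minimal
polynomial.  Equivalently, `M(α) = H(α) ^ deg α` where `H` is the absolute Weil height
`H(α) = ∏_v max {1, |α|_v}`. -/
def mahlerM (α : K) : ℝ :=
  primLead α * (((minpoly ℚ α).aroots ℂ).map fun z => max 1 ‖z‖).prod

/-- The absolute Weil height `H(α) = ∏_v max {1, |α|_v} = M(α) ^ (1 / deg α)`. -/
def weilH (α : K) : ℝ :=
  mahlerM α ^ (((minpoly ℚ α).natDegree : ℝ))⁻¹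

/-- The strong (non-Archimedean) metric Mahler measure
`M_∞(α) = inf { max_n M(αₙ) : α = α₁α₂⋯ , αₙ = 1 for a.e. n }`. -/
def MInf (α : Kˣ) : ℝ :=
  sInf {t : ℝ | ∃ a : ℕ → Kˣ, {n | a n ≠ 1}.Finite ∧ (∏ᶠ n, a n) = α ∧
    t = ⨆ n, mahlerM (a n : K)}

/-!
If every factor `αₙ` has `M(αₙ) < 2`, all factors are algebraic integers. Taking norms from
`E = ℚ(α, α₁, α₂, …)` down to `F = ℚ(α)` gives `α ^ [E : F] = ∏ₙ δₙ ^ kₙ`, where `δₙ ∈ F` is the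
product of the `F`-conjugates of `αₙ`. Since `α` is not a root of unity, neither is some `δₙ`,
so `H(δₙ) > 1` by Kronecker's theorem. Every complex conjugate of the algebraic integer `δₙ` is
the product of a sub-multiset of the complex conjugates of `αₙ`, so its absolute value is at most
`M(αₙ)`; hence `H(δₙ) ≤ M(αₙ)`. If instead some `M(αₙ) ≥ 2`, then `γ = 2` works.
-/

open IntermediateField

lemma one_le_prod_max_one_norm {E : Type*} [Norm E] (S : Multiset E) :
    1 ≤ (S.map fun z => max 1 ‖z‖).prod :=
  Multiset.one_le_prod fun _ h => by
    obtain ⟨z, -, rfl⟩ := Multiset.mem_map.mp h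
    exact le_max_left _ _

lemma prod_max_one_norm_mono {E : Type*} [Norm E] {S T : Multiset E} (h : S ≤ T) :
    (S.map fun z => max 1 ‖z‖).prod ≤ (T.map fun z => max 1 ‖z‖).prod := by
  obtain ⟨U, rfl⟩ := Multiset.le_iff_exists_add.mp h
  rw [Multiset.map_add, Multiset.prod_add]
  exact le_mul_of_one_le_right (zero_le_one.trans (one_le_prod_max_one_norm S))
    (one_le_prod_max_one_norm U)

lemma prod_max_one_norm_le_pow_card {E : Type*} [Norm E] {S : Multiset E} {B : ℝ} (hB : 1 ≤ B)
    (h : ∀ z ∈ S, ‖z‖ ≤ B) : (S.map fun z => max 1 ‖z‖).prod ≤ B ^ S.card :=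
  calc (S.map fun z => max 1 ‖z‖).prod ≤ (S.map fun _ => B).prod :=
        Multiset.prod_map_le_prod_map₀ _ _ (fun _ _ => by positivity)
          fun z hz => max_le hB (h z hz)
    _ = B ^ S.card := by simp

lemma norm_multiset_prod_le_prod_max_one_norm {E : Type*} [SeminormedCommRing E]
    [NormOneClass E] (S : Multiset E) : ‖S.prod‖ ≤ (S.map fun z => max 1 ‖z‖).prod := by
  induction S using Multiset.induction_on with
  | empty => simp
  | cons z S ih =>
    rw [Multiset.map_cons, Multiset.prod_cons, Multiset.prod_cons]
    exact (norm_mul_le _ _).trans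
      (mul_le_mul (le_max_right _ _) ih (norm_nonneg _) (by positivity))

section MinpolyRoots

variable {k F L : Type*} [Field k] [Field F] [Field L] [Algebra k F] [Algebra k L] [Algebra F L]
  [IsScalarTower k F L]

lemma map_minpoly_dvd_map_minpoly (x : L) :
    (minpoly F x).map (algebraMap F L) ∣ (minpoly k x).map (algebraMap k L) := by
  simpa [Polynomial.map_map, ← IsScalarTower.algebraMap_eq] using
    Polynomial.map_dvd (algebraMap F L) (minpoly.dvd_map_of_isScalarTower k F x)

lemma map_aroots_minpoly_le {A : Type*} [Field A] [Algebra k A] (ψ : L →ₐ[k] A) {x : L}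
    (hx : IsIntegral k x) : ((minpoly F x).aroots L).map ψ ≤ (minpoly k x).aroots A := by
  have hne : (minpoly k x).map (algebraMap k L) ≠ 0 := Polynomial.map_ne_zero (minpoly.ne_zero hx)
  calc ((minpoly F x).aroots L).map ψ ≤ ((minpoly k x).aroots L).map ψ :=
        Multiset.map_le_map (roots.le_of_dvd hne (map_minpoly_dvd_map_minpoly x))
    _ ≤ (((minpoly k x).map (algebraMap k L)).map (ψ : L →+* A)).roots :=
        map_roots_le (Polynomial.map_ne_zero hne)
    _ = (minpoly k x).aroots A := by rw [Polynomial.map_map, ψ.comp_algebraMap, aroots_def]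

end MinpolyRoots

lemma isIntegral_prod_aroots_minpoly {R F L : Type*} [CommRing R] [Field F] [Field L]
    [Algebra R F] [Algebra R L] [Algebra F L] [IsScalarTower R F L] {x : L}
    (hx : IsIntegral R x) : IsIntegral R ((minpoly F x).aroots L).prod := by
  obtain ⟨q, hq⟩ := minpoly.dvd_map_of_isScalarTower R F x
  refine IsIntegral.multiset_prod fun y hy => ⟨minpoly R x, minpoly.monic hx, ?_⟩
  rw [← aeval_def, ← aeval_map_algebraMap F, hq, map_mul, (mem_aroots.mp hy).2, zero_mul]

lemma prod_aroots_minpoly_ne_zero {F L : Type*} [Field F] [Field L] [Algebra F L] {x : L}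
    (hx : IsIntegral F x) (hx₀ : x ≠ 0) : ((minpoly F x).aroots L).prod ≠ 0 :=
  Multiset.prod_ne_zero fun h => minpoly.coeff_zero_ne_zero hx hx₀ <|
    (algebraMap F L).injective <| by
      rw [coeff_zero_eq_aeval_zero', (mem_aroots.mp h).2, map_zero]

lemma prod_aroots_minpoly_mem {k L : Type*} [Field k] [Field L] [Algebra k L] [IsAlgClosed L]
    (F : IntermediateField k L) (x : L) : ((minpoly F x).aroots L).prod ∈ F := by
  rw [← AdjoinSimple.norm_gen_eq_prod_roots x (IsAlgClosed.splits _)]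
  exact SetLike.coe_mem _

lemma exists_not_isOfFinOrder_prod_aroots_minpoly {F L ι : Type*} [Field F] [Field L]
    [Algebra F L] [IsAlgClosed L] [Algebra.IsAlgebraic F L] [Fintype ι] (b : ι → L) {x : F}
    (hb : ∏ i, b i = algebraMap F L x) (hx : ¬IsOfFinOrder x) :
    ∃ i, ¬IsOfFinOrder ((minpoly F (b i)).aroots L).prod := by
  by_contra! h
  let E := adjoin F (Set.range b)
  have : FiniteDimensional F E :=
    finiteDimensional_adjoin fun y _ => Algebra.IsIntegral.isIntegral y
  let c : ι → E := fun i => ⟨b i, subset_adjoin F _ (Set.mem_range_self i)⟩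
  have hc : ∏ i, c i = algebraMap F E x :=
    (algebraMap E L).injective <| by simpa [map_prod, ← IsScalarTower.algebraMap_apply] using hb
  have hnorm : algebraMap F L (x ^ Module.finrank F E) =
      ∏ i, ((minpoly F (b i)).aroots L).prod ^ Module.finrank F⟮c i⟯ E := by
    rw [← Algebra.norm_algebraMap, ← hc, map_prod, map_prod]
    refine Finset.prod_congr rfl fun i _ => ?_
    rw [show b i = algebraMap E L (c i) from rfl,
      minpoly.algebraMap_eq (algebraMap E L).injective (c i)]
    exact Algebra.norm_eq_prod_roots _ (IsAlgClosed.splits _)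
  refine hx ((isOfFinOrder_pow.mp ?_).resolve_right (Module.finrank_pos (R := F) (M := E)).ne')
  rw [← (algebraMap F L).injective.isOfFinOrder_iff (f := (algebraMap F L : F →* L))]
  exact hnorm ▸ Finset.prod_induction _ IsOfFinOrder (fun _ _ => IsOfFinOrder.mul) IsOfFinOrder.one
    fun i _ => (h i).pow

/- The `ℚ`-algebra structure on `K` found by instance search is `DivisionRing.toRatAlgebra`, for
which `AlgebraicClosure.isAlgebraic ℚ` is not found automatically. -/
instance isAlgebraic_rat_algebraicClosure : Algebra.IsAlgebraic ℚ K := AlgebraicClosure.isAlgebraic ℚ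

lemma primLead_pos (x : K) : 0 < primLead x :=
  Nat.pos_of_ne_zero fun h => by
    obtain ⟨i, -, hi⟩ := Finset.lcm_eq_zero_iff.mp h
    exact Rat.den_ne_zero _ hi

lemma primLead_eq_one_of_isIntegral {x : K} (hx : IsIntegral ℤ x) : primLead x = 1 :=
  Nat.dvd_one.mp <| Finset.lcm_dvd fun i _ => by
    rw [minpoly.isIntegrallyClosed_eq_field_fractions' ℚ hx, coeff_map, eq_intCast,
      Rat.den_intCast]

lemma isIntegral_of_primLead_eq_one {x : K} (h : primLead x = 1) : IsIntegral ℤ x := by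
  have hlifts : minpoly ℚ x ∈ lifts (algebraMap ℤ ℚ) := by
    refine (lifts_iff_coeff_lifts _).mpr fun i => ?_
    by_cases hi : i ∈ (minpoly ℚ x).support
    · have hden : ((minpoly ℚ x).coeff i).den = 1 :=
        Nat.dvd_one.mp (h ▸ Finset.dvd_lcm (f := fun i => ((minpoly ℚ x).coeff i).den) hi)
      exact ⟨_, (Rat.den_eq_one_iff _).mp hden⟩
    · exact ⟨0, by simp [notMem_support_iff.mp hi]⟩
  obtain ⟨p, hp, -, hmonic⟩ :=
    lifts_and_natDegree_eq_and_monic hlifts (minpoly.monic (Algebra.IsIntegral.isIntegral x))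
  exact ⟨p, hmonic, by rw [← aeval_def, ← aeval_map_algebraMap ℚ, hp, minpoly.aeval]⟩

lemma one_le_mahlerM (x : K) : 1 ≤ mahlerM x :=
  one_le_mul_of_one_le_of_one_le (by exact_mod_cast primLead_pos x)
    (one_le_prod_max_one_norm _)

lemma isIntegral_of_mahlerM_lt_two {x : K} (h : mahlerM x < 2) : IsIntegral ℤ x := by
  refine isIntegral_of_primLead_eq_one (le_antisymm (Nat.lt_succ_iff.mp ?_) (primLead_pos x))
  have := one_le_prod_max_one_norm ((minpoly ℚ x).aroots ℂ)
  rw [mahlerM] at h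
  exact_mod_cast (by nlinarith : (primLead x : ℝ) < 2)

lemma mahlerM_eq_mahlerMeasure {x : K} (hx : IsIntegral ℤ x) :
    mahlerM x = ((minpoly ℤ x).map (Int.castRingHom ℂ)).mahlerMeasure := by
  rw [mahlerM, primLead_eq_one_of_isIntegral hx, mahlerMeasure_eq_leadingCoeff_mul_prod_roots,
    ((minpoly.monic hx).map _).leadingCoeff, aroots_def,
    minpoly.isIntegrallyClosed_eq_field_fractions' ℚ hx, Polynomial.map_map,
    RingHom.ext_int ((algebraMap ℚ ℂ).comp (algebraMap ℤ ℚ)) (Int.castRingHom ℂ)]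
  simp

lemma isOfFinOrder_of_mahlerM_le_one {x : K} (hx₀ : x ≠ 0) (hx : IsIntegral ℤ x)
    (h : mahlerM x ≤ 1) : IsOfFinOrder x := by
  let ψ : K →ₐ[ℚ] ℂ := IsAlgClosed.lift
  have hroot : ψ x ∈ (minpoly ℤ x).aroots ℂ := by
    have := aeval_algHom_apply (ψ : K →+* ℂ).toIntAlgHom x (minpoly ℤ x)
    rw [minpoly.aeval, map_zero] at this
    exact mem_aroots.mpr ⟨minpoly.ne_zero hx, this⟩
  obtain ⟨n, hn, hxn⟩ := pow_eq_one_of_mahlerMeasure_eq_one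
    ((mahlerM_eq_mahlerMeasure hx).symm.trans (h.antisymm (one_le_mahlerM x)))
    ((map_ne_zero_iff ψ ψ.injective).mpr hx₀) hroot
  exact isOfFinOrder_iff_pow_eq_one.mpr ⟨n, hn, ψ.injective (by simpa using hxn)⟩

lemma norm_prod_le_mahlerM {x : K} {S : Multiset ℂ} (h : S ≤ (minpoly ℚ x).aroots ℂ) :
    ‖S.prod‖ ≤ mahlerM x :=
  calc ‖S.prod‖ ≤ (S.map fun z => max 1 ‖z‖).prod := norm_multiset_prod_le_prod_max_one_norm S
    _ ≤ (((minpoly ℚ x).aroots ℂ).map fun z => max 1 ‖z‖).prod := prod_max_one_norm_mono h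
    _ ≤ mahlerM x := le_mul_of_one_le_left (zero_le_one.trans (one_le_prod_max_one_norm _))
        (by exact_mod_cast primLead_pos x)

lemma weilH_le_of_forall_norm_le {x : K} {B : ℝ} (hx : IsIntegral ℤ x) (hB : 1 ≤ B)
    (h : ∀ z ∈ (minpoly ℚ x).aroots ℂ, ‖z‖ ≤ B) : weilH x ≤ B := by
  set d := (minpoly ℚ x).natDegree
  have hd : (d : ℝ) ≠ 0 := by
    exact_mod_cast (minpoly.natDegree_pos (Algebra.IsIntegral.isIntegral (R := ℚ) x)).ne'
  have hM : mahlerM x ≤ B ^ d := by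
    rw [mahlerM, primLead_eq_one_of_isIntegral hx, Nat.cast_one, one_mul,
      ← show ((minpoly ℚ x).aroots ℂ).card = d from IsAlgClosed.card_aroots_eq_natDegree]
    exact prod_max_one_norm_le_pow_card hB h
  calc weilH x ≤ (B ^ d) ^ (d : ℝ)⁻¹ :=
        Real.rpow_le_rpow (zero_le_one.trans (one_le_mahlerM x)) hM (by positivity)
    _ = B := by
      rw [← Real.rpow_natCast, ← Real.rpow_mul (by positivity), mul_inv_cancel₀ hd,
        Real.rpow_one]

lemma one_lt_weilH_of_not_isOfFinOrder {x : K} (hx₀ : x ≠ 0) (hx : IsIntegral ℤ x)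
    (h : ¬IsOfFinOrder x) : 1 < weilH x := by
  have hM : 1 < mahlerM x :=
    lt_of_not_ge fun hle => h (isOfFinOrder_of_mahlerM_le_one hx₀ hx hle)
  have hd : 0 < (minpoly ℚ x).natDegree :=
    minpoly.natDegree_pos (Algebra.IsIntegral.isIntegral x)
  exact Real.one_lt_rpow hM (by positivity)

lemma weilH_two : weilH (2 : K) = 2 := by
  have hmin : minpoly ℚ (2 : K) = X - C 2 := by
    simpa using minpoly.eq_X_sub_C K (2 : ℚ)
  have hM : mahlerM (2 : K) = 2 := by
    rw [mahlerM, primLead_eq_one_of_isIntegral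
      (by exact_mod_cast isIntegral_natCast (R := ℤ) (B := K) 2), hmin, aroots_def]
    norm_num
  rw [weilH, hM, hmin, natDegree_X_sub_C]
  norm_num

lemma weilH_prod_aroots_minpoly_le (F : IntermediateField ℚ K) {x : K} (hx : IsIntegral ℤ x) :
    weilH ((minpoly F x).aroots K).prod ≤ mahlerM x := by
  refine weilH_le_of_forall_norm_le (isIntegral_prod_aroots_minpoly hx) (one_le_mahlerM x)
    fun z hz => ?_
  obtain ⟨ψ, rfl⟩ : ∃ ψ : K →ₐ[ℚ] ℂ, ψ ((minpoly F x).aroots K).prod = z := by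
    rw [← Set.mem_range, Algebra.IsAlgebraic.range_eval_eq_rootSet_minpoly]
    exact mem_rootSet.mpr (mem_aroots.mp hz)
  rw [map_multiset_prod]
  exact norm_prod_le_mahlerM (map_aroots_minpoly_le ψ (Algebra.IsIntegral.isIntegral x))

lemma exists_weilH_le_of_forall_mahlerM_lt_two {ι : Type*} [Fintype ι] {α : K}
    (hα : ¬IsOfFinOrder α) (b : ι → K) (hb : ∏ i, b i = α) (hb₀ : ∀ i, b i ≠ 0)
    (hsmall : ∀ i, mahlerM (b i) < 2) :
    ∃ γ ∈ ℚ⟮α⟯, 1 < weilH γ ∧ ∃ i, weilH γ ≤ mahlerM (b i) := by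
  have hgen : ¬IsOfFinOrder (AdjoinSimple.gen ℚ α) := fun h =>
    hα (AdjoinSimple.algebraMap_gen ℚ α ▸ (algebraMap ℚ⟮α⟯ K : ℚ⟮α⟯ →* K).isOfFinOrder h)
  obtain ⟨i, hi⟩ := exists_not_isOfFinOrder_prod_aroots_minpoly b
    (hb.trans (AdjoinSimple.algebraMap_gen ℚ α).symm) hgen
  have hbi := isIntegral_of_mahlerM_lt_two (hsmall i)
  exact ⟨_, prod_aroots_minpoly_mem _ _, one_lt_weilH_of_not_isOfFinOrder
    (prod_aroots_minpoly_ne_zero (Algebra.IsIntegral.isIntegral _) (hb₀ i))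
    (isIntegral_prod_aroots_minpoly hbi) hi, i, weilH_prod_aroots_minpoly_le _ hbi⟩

lemma exists_weilH_le_mahlerM {ι : Type*} [Fintype ι] {α : K} (hα : ¬IsOfFinOrder α)
    (b : ι → Kˣ) (hb : ∏ i, (b i : K) = α) :
    ∃ γ ∈ ℚ⟮α⟯, 1 < weilH γ ∧ ∃ i, weilH γ ≤ mahlerM (b i) := by
  by_cases hsmall : ∀ i, mahlerM (b i) < 2
  · exact exists_weilH_le_of_forall_mahlerM_lt_two hα _ hb (fun i => (b i).ne_zero) hsmall
  obtain ⟨i, hi⟩ := not_forall.mp hsmall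
  exact ⟨2, ofNat_mem _ 2, by norm_num [weilH_two], i, weilH_two ▸ not_lt.mp hi⟩

lemma bddAbove_range_mahlerM {a : ℕ → Kˣ} (ha : {n | a n ≠ 1}.Finite) :
    BddAbove (Set.range fun n => mahlerM (a n : K)) := by
  refine (((ha.image a).insert 1).image fun u : Kˣ => mahlerM u).bddAbove.mono ?_
  rintro _ ⟨n, rfl⟩
  exact Set.mem_image_of_mem _ (Function.range_subset_insert_image_mulSupport a ⟨n, rfl⟩)

/-- **Theorem 1 (Strong metric bound).** If `α` is a non-zero algebraic number that is
not a root of unity, then `M_∞(α) ≥ inf { H(γ) : γ ∈ ℚ(α), H(γ) > 1 }`. -/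
theorem strong_metric_bound (α : Kˣ) (hα : ¬ ∃ n : ℕ, 0 < n ∧ α ^ n = 1) :
    sInf {h : ℝ | ∃ γ : K, γ ∈ IntermediateField.adjoin ℚ {(α : K)} ∧
      1 < weilH γ ∧ h = weilH γ} ≤ MInf α := by
  have hα' : ¬IsOfFinOrder (α : K) := by rwa [Units.isOfFinOrder_val, isOfFinOrder_iff_pow_eq_one]
  refine le_csInf ⟨_, Pi.mulSingle 0 α,
    (Set.finite_singleton 0).subset Pi.mulSupport_mulSingle_subset, by
      rw [finprod_eq_single _ 0 fun n hn => Pi.mulSingle_eq_of_ne hn _, Pi.mulSingle_eq_same],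
    rfl⟩ ?_
  rintro _ ⟨a, ha, hprod, rfl⟩
  have hb : ∏ n : ha.toFinset, (a n : K) = α := by
    rw [Finset.prod_coe_sort ha.toFinset (fun n => (a n : K)), ← Units.coe_prod,
      ← finprod_eq_finsetProd_of_mulSupport_subset a ha.coe_toFinset.superset, hprod]
  obtain ⟨γ, hγ, hγ₁, n, hγn⟩ := exists_weilH_le_mahlerM hα' (fun n : ha.toFinset => a n) hb
  have hbdd : BddBelow {h : ℝ | ∃ γ : K, γ ∈ ℚ⟮(α : K)⟯ ∧ 1 < weilH γ ∧ h = weilH γ} :=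
    ⟨1, by rintro _ ⟨_, _, h, rfl⟩; exact h.le⟩
  calc sInf _ ≤ weilH γ := csInf_le hbdd ⟨γ, hγ, hγ₁, rfl⟩
    _ ≤ mahlerM (a n) := hγn
    _ ≤ ⨆ n, mahlerM (a n : K) := le_ciSup (bddAbove_range_mahlerM ha) n
end
end

section
/- Let α be a non-zero algebraic number and let p be a rational prime such that α is not a p-adic unit. Then M_∞(α) ≥ p. In particular, if p is the largest prime such that α fails to be a p-adic unit, then M_∞(α) ≥ p. -/
/-!
Being a `p`-adic unit is multiplicative, so every factorization `α = α₁ ⋯ αₙ` has a factor `β`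
that is not a `p`-adic unit, and it suffices to show `p ≤ M(β)`. Let `P ∈ ℤ[X]` be the integer
minimal polynomial of `β`, so that `M(β)` is the Mahler measure of `P`. If `p` divided neither the
leading coefficient nor the constant term of `P`, then dividing `P` and its reverse by these
coefficients, which are units of `ℤ_(p)`, would give monic equations over `ℤ_(p)` for `β` and
`β⁻¹`. Hence `p` divides one of these two non-zero integers, and both are bounded in absolute
value by the Mahler measure of `P`.
-/

open Polynomial

noncomputable section

local notation "K" => AlgebraicClosure ℚ

/-- The subring `ℤ_(p)` of `K`: the rational numbers expressible with denominator
prime to `p`. -/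
def Zp (p : ℕ) (hp : p.Prime) : Subring K where
  carrier := {x | ∃ a b : ℤ, ¬ ((p : ℤ) ∣ b) ∧ (b : K) * x = (a : K)}
  zero_mem' := ⟨0, 1, (Nat.prime_iff_prime_int.mp hp).not_dvd_one, by simp⟩
  one_mem' := ⟨1, 1, (Nat.prime_iff_prime_int.mp hp).not_dvd_one, by simp⟩
  add_mem' := by
    rintro x y ⟨a, b, hb, hab⟩ ⟨c, d, hd, hcd⟩
    exact ⟨a * d + c * b, b * d,
      fun h => (((Nat.prime_iff_prime_int.mp hp).dvd_mul.mp h).elim hb hd),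
      by push_cast; linear_combination (d : K) * hab + (b : K) * hcd⟩
  neg_mem' := by
    rintro x ⟨a, b, hb, hab⟩
    exact ⟨-a, b, hb, by push_cast; linear_combination -hab⟩
  mul_mem' := by
    rintro x y ⟨a, b, hb, hab⟩ ⟨c, d, hd, hcd⟩
    exact ⟨a * c, b * d,
      fun h => (((Nat.prime_iff_prime_int.mp hp).dvd_mul.mp h).elim hb hd),
      by push_cast; linear_combination ((d : K) * y) * hab + (a : K) * hcd⟩

/-- `α` is a `p`-adic unit iff both `α` and `α⁻¹` are integral over the local ring
`ℤ_(p)`; equivalently, `|α|_v = 1` for every place `v` of a number field containing `α`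
that divides `p`. -/
def IsPadicUnit (p : ℕ) (hp : p.Prime) (α : K) : Prop :=
  IsIntegral (Zp p hp) α ∧ IsIntegral (Zp p hp) α⁻¹

section PadicUnit

variable {p : ℕ} (hp : p.Prime)

lemma intCast_inv_mem_Zp {b : ℤ} (hb : ¬ (p : ℤ) ∣ b) : (b : K)⁻¹ ∈ Zp p hp :=
  ⟨1, b, hb, mul_inv_cancel₀ (Int.cast_ne_zero.mpr fun h => hb (h ▸ dvd_zero _))⟩

lemma isIntegral_Zp_of_aeval_eq_zero {x : K} {P : ℤ[X]} (hx : aeval x P = 0)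
    (hlead : ¬ (p : ℤ) ∣ P.leadingCoeff) : IsIntegral (Zp p hp) x := by
  have hinj : Function.Injective (algebraMap ℤ (Zp p hp)) := fun a b h => by
    simpa using congrArg (fun z : Zp p hp => (z : K)) h
  set u : Zp p hp := ⟨_, intCast_inv_mem_Zp hp hlead⟩
  have hu : u * (P.map (algebraMap ℤ (Zp p hp))).leadingCoeff = 1 := by
    rw [leadingCoeff_map_of_injective hinj]
    refine Subtype.ext (inv_mul_cancel₀ ?_)
    exact Int.cast_ne_zero.mpr fun h => hlead (h ▸ dvd_zero _)
  refine ⟨C u * P.map (algebraMap ℤ (Zp p hp)), monic_C_mul_of_mul_leadingCoeff_eq_one hu, ?_⟩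
  rw [← aeval_def, map_mul, aeval_map_algebraMap, hx, mul_zero]

lemma isPadicUnit_of_aeval_eq_zero {x : K} (hx0 : x ≠ 0) {P : ℤ[X]} (hx : aeval x P = 0)
    (hlead : ¬ (p : ℤ) ∣ P.leadingCoeff) (hcoeff : ¬ (p : ℤ) ∣ P.coeff 0) :
    IsPadicUnit p hp x := by
  refine ⟨isIntegral_Zp_of_aeval_eq_zero hp hx hlead, isIntegral_Zp_of_aeval_eq_zero hp
    (P := P.reverse) ?_ ?_⟩
  · let _ : Invertible x := invertibleOfNonzero hx0
    rw [← invOf_eq_inv, aeval_def, eval₂_reverse_eq_zero_iff, ← aeval_def, hx]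
  · have hc0 : P.coeff 0 ≠ 0 := fun h => hcoeff (h ▸ dvd_zero _)
    rwa [reverse_leadingCoeff, trailingCoeff_eq_coeff_zero hc0]

lemma isPadicUnit_one : IsPadicUnit p hp 1 :=
  ⟨isIntegral_one, by rw [inv_one]; exact isIntegral_one⟩

lemma isPadicUnit_mul {x y : K} (hx : IsPadicUnit p hp x) (hy : IsPadicUnit p hp y) :
    IsPadicUnit p hp (x * y) :=
  ⟨hx.1.mul hy.1, by rw [mul_inv]; exact hx.2.mul hy.2⟩

lemma isPadicUnit_finprod {ι : Type*} {a : ι → Kˣ} (ha : ∀ i, IsPadicUnit p hp (a i)) :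
    IsPadicUnit p hp ((∏ᶠ i, a i : Kˣ) : K) :=
  finprod_induction (fun u : Kˣ => IsPadicUnit p hp u) (isPadicUnit_one hp)
    (fun _ _ hx hy => by simpa using isPadicUnit_mul hp hx hy) ha

end PadicUnit

section IntegerMinpoly

lemma isIntegral_rat (α : K) : IsIntegral ℚ α :=
  ((AlgebraicClosure.isAlgebraic ℚ).isAlgebraic α).isIntegral

lemma den_coeff_minpoly_dvd_primLead (α : K) (i : ℕ) :
    ((minpoly ℚ α).coeff i).den ∣ primLead α := by
  by_cases hi : i ∈ (minpoly ℚ α).support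
  · exact Finset.dvd_lcm hi
  · simp [notMem_support_iff.mp hi]

lemma primLead_ne_zero (α : K) : primLead α ≠ 0 := by
  intro h
  obtain ⟨i, -, hi⟩ := Finset.lcm_eq_zero_iff.mp h
  exact ((minpoly ℚ α).coeff i).den_nz hi

def IsIntMinpoly (α : K) (P : ℤ[X]) : Prop :=
  P.map (Int.castRingHom ℚ) = C (primLead α : ℚ) * minpoly ℚ α

lemma exists_isIntMinpoly (α : K) : ∃ P : ℤ[X], IsIntMinpoly α P := by
  refine (lifts_iff_coeff_lifts _).mpr fun i => ?_
  obtain ⟨k, hk⟩ := den_coeff_minpoly_dvd_primLead α i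
  refine ⟨k * ((minpoly ℚ α).coeff i).num, ?_⟩
  rw [coeff_C_mul, hk, eq_intCast]
  push_cast
  linear_combination (-(k : ℚ)) * Rat.mul_den_eq_num ((minpoly ℚ α).coeff i)

end IntegerMinpoly

namespace IsIntMinpoly

variable {α : K} {P : ℤ[X]}

lemma map_complex_eq (hP : IsIntMinpoly α P) :
    P.map (Int.castRingHom ℂ) =
      C (primLead α : ℂ) * (minpoly ℚ α).map (algebraMap ℚ ℂ) := by
  have h := congrArg (map (algebraMap ℚ ℂ)) hP
  rwa [map_map, RingHom.ext_int ((algebraMap ℚ ℂ).comp _) (Int.castRingHom ℂ),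
    Polynomial.map_mul, map_C, map_natCast] at h

lemma mahlerM_eq_mahlerMeasure (hP : IsIntMinpoly α P) :
    mahlerM α = (P.map (Int.castRingHom ℂ)).mahlerMeasure := by
  have hL : (primLead α : ℂ) ≠ 0 := Nat.cast_ne_zero.mpr (primLead_ne_zero α)
  rw [mahlerMeasure_eq_leadingCoeff_mul_prod_roots, hP.map_complex_eq, leadingCoeff_mul,
    leadingCoeff_C, ((minpoly.monic (isIntegral_rat α)).map _).leadingCoeff, mul_one,
    roots_C_mul _ hL, Complex.norm_natCast]
  rfl

lemma coeff_zero_ne_zero (hα : α ≠ 0) (hP : IsIntMinpoly α P) : P.coeff 0 ≠ 0 := by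
  have h : (P.coeff 0 : ℚ) = primLead α * (minpoly ℚ α).coeff 0 := by
    simpa using congrArg (coeff · 0) hP
  have hc0 := minpoly.coeff_zero_ne_zero (isIntegral_rat α) hα
  exact_mod_cast h ▸ mul_ne_zero (Nat.cast_ne_zero.mpr (primLead_ne_zero α)) hc0

lemma ne_zero (hP : IsIntMinpoly α P) : P ≠ 0 := by
  rintro rfl
  rw [IsIntMinpoly, Polynomial.map_zero, eq_comm, mul_eq_zero, C_eq_zero, Nat.cast_eq_zero] at hP
  exact hP.elim (primLead_ne_zero α) (minpoly.ne_zero (isIntegral_rat α))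

lemma aeval_eq_zero (hP : IsIntMinpoly α P) : aeval α P = 0 := by
  rw [← aeval_map_algebraMap ℚ, algebraMap_int_eq, hP, map_mul, minpoly.aeval, mul_zero]

end IsIntMinpoly

lemma natCast_le_norm_of_dvd {p : ℕ} {c : ℤ} (hc : c ≠ 0) (hpc : (p : ℤ) ∣ c) :
    (p : ℝ) ≤ ‖(c : ℂ)‖ := by
  rw [Complex.norm_intCast, ← Int.cast_natCast, ← Int.cast_abs]
  exact_mod_cast Int.le_of_dvd (abs_pos.mpr hc) ((dvd_abs _ _).mpr hpc)

lemma le_mahlerM_of_not_isPadicUnit {p : ℕ} (hp : p.Prime) {α : K} (hα : α ≠ 0)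
    (h : ¬ IsPadicUnit p hp α) : (p : ℝ) ≤ mahlerM α := by
  obtain ⟨P, hP⟩ := exists_isIntMinpoly α
  rw [hP.mahlerM_eq_mahlerMeasure]
  by_cases hlead : (p : ℤ) ∣ P.leadingCoeff
  · refine (natCast_le_norm_of_dvd (leadingCoeff_ne_zero.mpr hP.ne_zero) hlead).trans ?_
    simpa [leadingCoeff_map_of_injective (Int.castRingHom ℂ).injective_int]
      using leadingCoeff_le_mahlerMeasure (P.map (Int.castRingHom ℂ))
  by_cases hcoeff : (p : ℤ) ∣ P.coeff 0
  · refine (natCast_le_norm_of_dvd (hP.coeff_zero_ne_zero hα) hcoeff).trans ?_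
    simpa using norm_coeff_le_choose_mul_mahlerMeasure 0 (P.map (Int.castRingHom ℂ))
  exact absurd (isPadicUnit_of_aeval_eq_zero hp hα hP.aeval_eq_zero hlead hcoeff) h

/-- **Theorem.** If `α` is a non-zero algebraic number and `p` is a rational prime such
that `α` is not a `p`-adic unit, then `M_∞(α) ≥ p`.  In particular this holds when `p`
is the largest such prime. -/
theorem MInf_ge_of_not_padicUnit (α : Kˣ) (p : ℕ) (hp : p.Prime)
    (h : ¬ IsPadicUnit p hp (α : K)) : (p : ℝ) ≤ MInf α := by
  refine le_csInf ⟨_, Pi.mulSingle 0 α, (Set.finite_singleton 0).subset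
    (Pi.mulSupport_mulSingle_subset), ?_, rfl⟩ ?_
  · rw [finprod_eq_single _ 0 fun n hn => Pi.mulSingle_eq_of_ne (M := fun _ => Kˣ) hn α,
      Pi.mulSingle_eq_same]
  rintro t ⟨a, ha, rfl, rfl⟩
  obtain ⟨n, hn⟩ : ∃ n, ¬ IsPadicUnit p hp (a n) := by
    by_contra! hall
    exact h (isPadicUnit_finprod hp hall)
  have hbdd : BddAbove (Set.range fun n => mahlerM (a n)) := by
    have hfin : (Set.range a).Finite :=
      ((ha.image a).insert 1).subset (Function.range_subset_insert_image_mulSupport a)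
    exact Set.range_comp (fun u : Kˣ => mahlerM u) a ▸ (hfin.image _).bddAbove
  exact (le_mahlerM_of_not_isPadicUnit hp (a n).ne_zero hn).trans (le_ciSup hbdd n)
end
end

section
/- Let G be an abelian group and ρ a height on G. Then ρ₁ is a metric height on G, and ρ₁(α) ≤ ρ(α) for all α ∈ G. -/
noncomputable section

variable {G : Type*} [CommGroup G]

/-- A *height* on an abelian group `G`: a function `ρ : G → [1, ∞)` with `ρ(1) = 1`
and `ρ(α) = ρ(α⁻¹)`. -/
def IsHeight (ρ : G → ℝ) : Prop :=
  ρ 1 = 1 ∧ (∀ α : G, 1 ≤ ρ α) ∧ ∀ α : G, ρ α⁻¹ = ρ α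

/-- A *metric height*: a height additionally satisfying `ρ(αβ) ≤ ρ(α)ρ(β)`. -/
def IsMetricHeight (ρ : G → ℝ) : Prop :=
  IsHeight ρ ∧ ∀ α β : G, ρ (α * β) ≤ ρ α * ρ β

/-- A *strong (non-Archimedean) metric height*: a height additionally satisfying
`ρ(αβ) ≤ max {ρ(α), ρ(β)}`. -/
def IsStrongMetricHeight (ρ : G → ℝ) : Prop :=
  IsHeight ρ ∧ ∀ α β : G, ρ (α * β) ≤ max (ρ α) (ρ β)

/-- The associated metric height
`ρ₁(α) = inf { ∏_n ρ(αₙ) : α = α₁α₂⋯ , αₙ = 1 for a.e. n }`. -/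
def metricH (ρ : G → ℝ) (α : G) : ℝ :=
  sInf {t : ℝ | ∃ a : ℕ → G, {n | a n ≠ 1}.Finite ∧ (∏ᶠ n, a n) = α ∧
    t = ∏ᶠ n, ρ (a n)}

/-- The associated strong metric height
`ρ_∞(α) = inf { max_n ρ(αₙ) : α = α₁α₂⋯ , αₙ = 1 for a.e. n }`. -/
def strongH (ρ : G → ℝ) (α : G) : ℝ :=
  sInf {t : ℝ | ∃ a : ℕ → G, {n | a n ≠ 1}.Finite ∧ (∏ᶠ n, a n) = α ∧
    t = ⨆ n, ρ (a n)}

namespace MetricHAux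

lemma prod_getD {M : Type*} [CommMonoid M] (l : List M) :
    ∏ i ∈ Finset.range l.length, l.getD i 1 = l.prod := by
  induction l with
  | nil => simp
  | cons x l ih =>
    rw [List.length_cons, Finset.prod_range_succ']
    simp only [List.getD_cons_succ, List.getD_cons_zero, ih, List.prod_cons, mul_comm]

lemma prod_map_inv (l : List G) : (l.map (·⁻¹)).prod = l.prod⁻¹ := by
  induction l with
  | nil => simp
  | cons x l ih => simp [ih, mul_comm]

lemma mem_iff (ρ : G → ℝ) (hρ1 : ρ 1 = 1) (α : G) (t : ℝ) :
    t ∈ {t : ℝ | ∃ a : ℕ → G, {n | a n ≠ 1}.Finite ∧ (∏ᶠ n, a n) = α ∧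
      t = ∏ᶠ n, ρ (a n)} ↔ ∃ l : List G, l.prod = α ∧ t = (l.map ρ).prod := by
  constructor
  · rintro ⟨a, hfin, hprod, rfl⟩
    obtain ⟨N, hN⟩ := Finset.exists_nat_subset_range hfin.toFinset
    have hsub : Function.mulSupport a ⊆ ↑(Finset.range N) := by
      intro n hn
      exact hN (hfin.mem_toFinset.2 hn)
    have hsub2 : Function.mulSupport (fun n => ρ (a n)) ⊆ ↑(Finset.range N) := by
      intro n hn
      apply hsub
      intro hcon
      exact hn (by simp [Function.mem_mulSupport] at hn ⊢; simp [hcon, hρ1] at hn ⊢)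
    refine ⟨(List.range N).map a, ?_, ?_⟩
    · rw [← hprod, finprod_eq_prod_of_mulSupport_subset a hsub]
      rfl
    · rw [finprod_eq_prod_of_mulSupport_subset _ hsub2]
      rw [List.map_map]
      rfl
  · rintro ⟨l, hprod, rfl⟩
    refine ⟨fun n => l.getD n 1, ?_, ?_, ?_⟩
    · apply Set.Finite.subset (Set.finite_Iio l.length)
      intro n hn
      simp only [Set.mem_setOf_eq] at hn
      by_contra hc
      exact hn (List.getD_eq_default _ _ (not_lt.1 hc))
    · rw [finprod_eq_prod_of_mulSupport_subset (s := Finset.range l.length)]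
      · exact (prod_getD l).trans hprod
      · intro n hn
        simp only [Finset.coe_range, Set.mem_Iio]
        by_contra hc
        exact hn (List.getD_eq_default _ _ (not_lt.1 hc))
    · rw [finprod_eq_prod_of_mulSupport_subset (s := Finset.range l.length)]
      · rw [← prod_getD (l.map ρ), List.length_map]
        apply Finset.prod_congr rfl
        intro n hn
        simp only [Finset.mem_range] at hn
        show (List.map ρ l).getD n 1 = ρ (l.getD n 1)
        rw [List.getD_eq_getElem _ _ (by simpa using hn), List.getD_eq_getElem _ _ hn]
        simp
      · intro n hn
        simp only [Finset.coe_range, Set.mem_Iio]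
        by_contra hc
        simp only [Function.mem_mulSupport] at hn
        rw [List.getD_eq_default _ _ (not_lt.1 hc)] at hn
        exact hn hρ1

end MetricHAux

/-- If `ρ` is a height on `G`, then `ρ₁` is a metric height on `G` with `ρ₁ ≤ ρ`. -/
theorem metricH_isMetricHeight_and_le (ρ : G → ℝ) (h : IsHeight ρ) :
    IsMetricHeight (metricH ρ) ∧ ∀ α : G, metricH ρ α ≤ ρ α := by
  obtain ⟨h1, hge, hinv⟩ := h
  set S : G → Set ℝ := fun α => {t : ℝ | ∃ a : ℕ → G, {n | a n ≠ 1}.Finite ∧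
    (∏ᶠ n, a n) = α ∧ t = ∏ᶠ n, ρ (a n)} with hS
  have hmem : ∀ α t, t ∈ S α ↔ ∃ l : List G, l.prod = α ∧ t = (l.map ρ).prod :=
    fun α t => MetricHAux.mem_iff ρ h1 α t
  have hne : ∀ α, ρ α ∈ S α := by
    intro α
    rw [hmem]
    exact ⟨[α], by simp, by simp⟩
  have hbdd : ∀ α, ∀ t ∈ S α, (1 : ℝ) ≤ t := by
    intro α t ht
    obtain ⟨l, -, rfl⟩ := (hmem α t).1 ht
    apply List.one_le_prod
    intro x hx
    obtain ⟨y, -, rfl⟩ := List.mem_map.1 hx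
    exact hge y
  have hbddBelow : ∀ α, BddBelow (S α) := fun α => ⟨1, hbdd α⟩
  have hle : ∀ α, metricH ρ α ≤ ρ α := fun α => csInf_le (hbddBelow α) (hne α)
  have h1le : ∀ α, 1 ≤ metricH ρ α := fun α => le_csInf ⟨ρ α, hne α⟩ (hbdd α)
  have hsubinv : ∀ α : G, S α ⊆ S α⁻¹ := by
    intro α t ht
    obtain ⟨l, hp, rfl⟩ := (hmem α t).1 ht
    rw [hmem]
    refine ⟨l.map (·⁻¹), ?_, ?_⟩
    · rw [← hp]
      exact MetricHAux.prod_map_inv l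
    · rw [List.map_map]
      congr 1
      apply List.map_congr_left
      intro x _
      exact (hinv x).symm
  have hSinv : ∀ α : G, S α⁻¹ = S α := by
    intro α
    apply le_antisymm
    · have := hsubinv α⁻¹
      rwa [inv_inv] at this
    · exact hsubinv α
  have hmul : ∀ α β : G, metricH ρ (α * β) ≤ metricH ρ α * metricH ρ β := by
    intro α β
    have key : ∀ t ∈ S α, ∀ s ∈ S β, metricH ρ (α * β) ≤ t * s := by
      intro t ht s hs
      obtain ⟨l, hl, rfl⟩ := (hmem α t).1 ht
      obtain ⟨l', hl', rfl⟩ := (hmem β s).1 hs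
      apply csInf_le (hbddBelow _)
      rw [hmem]
      exact ⟨l ++ l', by rw [List.prod_append, hl, hl'], by rw [List.map_append, List.prod_append]⟩
    -- now deduce sInf ≤ sInf * sInf
    have hstep : ∀ s ∈ S β, metricH ρ (α * β) ≤ metricH ρ α * s := by
      intro s hs
      have hspos : (0:ℝ) < s := lt_of_lt_of_le one_pos (hbdd β s hs)
      rw [← div_le_iff₀ hspos]
      apply le_csInf ⟨ρ α, hne α⟩
      intro t ht
      rw [div_le_iff₀ hspos]
      exact key t ht s hs
    have hpos : (0:ℝ) < metricH ρ α := lt_of_lt_of_le one_pos (h1le α)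
    rw [← div_le_iff₀' hpos]
    apply le_csInf ⟨ρ β, hne β⟩
    intro s hs
    rw [div_le_iff₀' hpos]
    exact hstep s hs
  refine ⟨⟨⟨?_, h1le, ?_⟩, hmul⟩, hle⟩
  · exact le_antisymm (by simpa [h1] using hle 1) (h1le 1)
  · intro α
    unfold metricH
    rw [show {t : ℝ | ∃ a : ℕ → G, {n | a n ≠ 1}.Finite ∧ (∏ᶠ n, a n) = α⁻¹ ∧
      t = ∏ᶠ n, ρ (a n)} = S α⁻¹ from rfl, hSinv]

end
end

section
/- Let G be an abelian group, ρ a height on G, and σ a metric height on G with σ(α) ≤ ρ(α) for all α ∈ G. Then σ(α) ≤ ρ₁(α) for all α ∈ G; that is, ρ₁ is the largest metric height bounded above by ρ. -/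
noncomputable section

variable {G : Type*} [CommGroup G]

/-! Any factorisation `α = α₁⋯αₙ` gives `σ(α) ≤ ∏ σ(αᵢ) ≤ ∏ ρ(αᵢ)` by submultiplicativity of `σ`
and `σ ≤ ρ`; taking the infimum over factorisations gives `σ(α) ≤ ρ₁(α)`. -/

open Function

theorem finprod_comp_mulSingle {ι M N : Type*} [DecidableEq ι] [CommMonoid M] [CommMonoid N]
    {f : M → N} (hf : f 1 = 1) (i : ι) (x : M) : ∏ᶠ j, f ((Pi.mulSingle i x : ι → M) j) = f x := by
  rw [finprod_eq_single _ i
    fun j hj => by rw [Pi.mulSingle_eq_of_ne hj, hf], Pi.mulSingle_eq_same]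

theorem IsHeight.nonneg {ρ : G → ℝ} (hρ : IsHeight ρ) (α : G) : 0 ≤ ρ α :=
  zero_le_one.trans (hρ.2.1 α)

namespace IsMetricHeight

variable {σ : G → ℝ}

theorem apply_prod_le {ι : Type*} (hσ : IsMetricHeight σ) (s : Finset ι) (a : ι → G) :
    σ (∏ i ∈ s, a i) ≤ ∏ i ∈ s, σ (a i) :=
  Finset.le_prod_of_submultiplicative_of_nonneg σ hσ.1.nonneg
    hσ.1.1.le hσ.2 s a

theorem apply_finprod_le_finprod {ι : Type*} {ρ : G → ℝ} (hσ : IsMetricHeight σ)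
    (hle : ∀ α, σ α ≤ ρ α) (hρ : ρ 1 = 1) {a : ι → G} (ha : (mulSupport a).Finite) :
    σ (∏ᶠ i, a i) ≤ ∏ᶠ i, ρ (a i) := by
  rw [finprod_eq_prod_of_mulSupport_subset a ha.coe_toFinset.ge,
    finprod_eq_prod_of_mulSupport_subset (fun i => ρ (a i))
      ((mulSupport_comp_subset hρ a).trans ha.coe_toFinset.ge)]
  calc σ (∏ i ∈ ha.toFinset, a i) ≤ ∏ i ∈ ha.toFinset, σ (a i) := hσ.apply_prod_le _ _
    _ ≤ ∏ i ∈ ha.toFinset, ρ (a i) :=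
      Finset.prod_le_prod (fun i _ => hσ.1.nonneg _) fun i _ => hle _

end IsMetricHeight

/-- If `ρ` is a height on `G` and `σ` is a metric height with `σ ≤ ρ`, then
`σ ≤ ρ₁`: `ρ₁` is the largest metric height bounded above by `ρ`. -/
theorem metricH_is_largest (ρ σ : G → ℝ) (hρ : IsHeight ρ) (hσ : IsMetricHeight σ)
    (hle : ∀ α : G, σ α ≤ ρ α) : ∀ α : G, σ α ≤ metricH ρ α := by
  classical
  intro α
  -- `sInf ∅ = 0` in `ℝ`, so the set of factorisations must be shown nonempty.
  have trivial_factorisation : ρ α ∈ {t : ℝ | ∃ a : ℕ → G, {n | a n ≠ 1}.Finite ∧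
      (∏ᶠ n, a n) = α ∧ t = ∏ᶠ n, ρ (a n)} :=
    ⟨Pi.mulSingle 0 α, (Set.finite_singleton 0).subset Pi.mulSupport_mulSingle_subset,
      finprod_comp_mulSingle (f := id) rfl 0 α, (finprod_comp_mulSingle hρ.1 0 α).symm⟩
  refine le_csInf ⟨ρ α, trivial_factorisation⟩ ?_
  rintro t ⟨a, ha, rfl, rfl⟩
  exact hσ.apply_finprod_le_finprod hle hρ.1 ha
end
end

section
/- Let G be an abelian group and ρ a height on G. Then ρ = ρ₁ if and only if ρ is a metric height. Consequently, (ρ₁)₁ = ρ₁. -/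
noncomputable section

variable {G : Type*} [CommGroup G]

namespace MetricHAux

/-- The defining set of `metricH ρ α`. -/
def S (ρ : G → ℝ) (α : G) : Set ℝ :=
  {t : ℝ | ∃ a : ℕ → G, {n | a n ≠ 1}.Finite ∧ (∏ᶠ n, a n) = α ∧
    t = ∏ᶠ n, ρ (a n)}

lemma metricH_eq_sInf (ρ : G → ℝ) (α : G) : metricH ρ α = sInf (S ρ α) := rfl

lemma one_le_fprod {s : Finset ℕ} {f : ℕ → ℝ} (hf : ∀ i, 1 ≤ f i) :
    1 ≤ ∏ i ∈ s, f i := by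
  calc (1:ℝ) = ∏ _i ∈ s, 1 := (Finset.prod_const_one).symm
  _ ≤ ∏ i ∈ s, f i :=
    Finset.prod_le_prod (fun i _ => zero_le_one) (fun i _ => hf i)

lemma mulSupport_comp {ρ : G → ℝ} (h : IsHeight ρ) (a : ℕ → G) :
    Function.mulSupport (fun n => ρ (a n)) ⊆ Function.mulSupport a := by
  intro n hn
  simp only [Function.mem_mulSupport] at hn ⊢
  intro hn1
  exact hn (by rw [hn1, h.1])

lemma one_le_mem {ρ : G → ℝ} (h : IsHeight ρ) {α : G} {t : ℝ} (ht : t ∈ S ρ α) :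
    1 ≤ t := by
  obtain ⟨a, ha, -, rfl⟩ := ht
  have hsub : Function.mulSupport (fun n => ρ (a n)) ⊆ ↑ha.toFinset := by
    intro n hn
    have := mulSupport_comp h a hn
    simpa using this
  rw [finprod_eq_prod_of_mulSupport_subset _ hsub]
  exact one_le_fprod (fun i => h.2.1 (a i))

lemma mem_self {ρ : G → ℝ} (h : IsHeight ρ) (α : G) : ρ α ∈ S ρ α := by
  refine ⟨fun n => if n = 0 then α else 1, ?_, ?_, ?_⟩
  · apply Set.Finite.subset (Set.finite_singleton 0)
    intro n hn
    simp only [Set.mem_setOf_eq] at hn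
    by_contra hne
    exact hn (if_neg (by simpa using hne))
  · rw [finprod_eq_single _ 0 (fun x hx => if_neg hx)]; simp
  · rw [finprod_eq_single _ 0 (fun x hx => by show ρ (if x = 0 then α else 1) = 1; rw [if_neg hx, h.1])]; simp

lemma S_nonempty {ρ : G → ℝ} (h : IsHeight ρ) (α : G) : (S ρ α).Nonempty :=
  ⟨ρ α, mem_self h α⟩

lemma S_bddBelow {ρ : G → ℝ} (h : IsHeight ρ) (α : G) : BddBelow (S ρ α) :=
  ⟨1, fun _ ht => one_le_mem h ht⟩

lemma one_le_metricH {ρ : G → ℝ} (h : IsHeight ρ) (α : G) : 1 ≤ metricH ρ α :=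
  le_csInf (S_nonempty h α) (fun _ ht => one_le_mem h ht)

lemma metricH_le_self {ρ : G → ℝ} (h : IsHeight ρ) (α : G) : metricH ρ α ≤ ρ α :=
  csInf_le (S_bddBelow h α) (mem_self h α)

lemma metricH_one {ρ : G → ℝ} (h : IsHeight ρ) : metricH ρ 1 = 1 :=
  le_antisymm (h.1 ▸ metricH_le_self h 1) (one_le_metricH h 1)

lemma S_inv_subset {ρ : G → ℝ} (h : IsHeight ρ) (α : G) : S ρ α⁻¹ ⊆ S ρ α := by
  rintro t ⟨a, ha, hprod, rfl⟩
  refine ⟨fun n => (a n)⁻¹, ?_, ?_, ?_⟩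
  · apply ha.subset; intro n; simp
  · rw [finprod_inv_distrib, hprod, inv_inv]
  · exact finprod_congr fun n => (h.2.2 (a n)).symm

lemma metricH_inv {ρ : G → ℝ} (h : IsHeight ρ) (α : G) :
    metricH ρ α⁻¹ = metricH ρ α := by
  have : S ρ α⁻¹ = S ρ α := by
    apply le_antisymm (S_inv_subset h α)
    have := S_inv_subset h α⁻¹
    rwa [inv_inv] at this
  rw [metricH_eq_sInf, metricH_eq_sInf, this]

lemma concat_finprod {M : Type*} [CommMonoid M] (N : ℕ) (f g : ℕ → M)
    (hf : Function.mulSupport f ⊆ Set.Iio N) (hg : Function.mulSupport g ⊆ Set.Iio N) :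
    ∏ᶠ n, (if n < N then f n else g (n - N)) = (∏ᶠ n, f n) * ∏ᶠ n, g n := by
  have hc : Function.mulSupport (fun n => if n < N then f n else g (n - N))
      ⊆ ↑(Finset.range (N + N)) := by
    intro n hn
    simp only [Function.mem_mulSupport] at hn
    simp only [Finset.coe_range, Set.mem_Iio]
    by_cases hlt : n < N
    · omega
    · rw [if_neg hlt] at hn
      have := hg (Function.mem_mulSupport.mpr hn)
      simp only [Set.mem_Iio] at this
      omega
  have hf' : Function.mulSupport f ⊆ ↑(Finset.range N) := by simpa using hf
  have hg' : Function.mulSupport g ⊆ ↑(Finset.range N) := by simpa using hg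
  rw [finprod_eq_prod_of_mulSupport_subset _ hc,
      finprod_eq_prod_of_mulSupport_subset f hf',
      finprod_eq_prod_of_mulSupport_subset g hg',
      Finset.prod_range_add]
  congr 1
  · exact Finset.prod_congr rfl fun i hi => if_pos (Finset.mem_range.mp hi)
  · refine Finset.prod_congr rfl fun i _ => ?_
    rw [if_neg (by omega), Nat.add_sub_cancel_left]

lemma mul_mem {ρ : G → ℝ} (h : IsHeight ρ) {α β : G} {s t : ℝ}
    (hs : s ∈ S ρ α) (ht : t ∈ S ρ β) : s * t ∈ S ρ (α * β) := by
  obtain ⟨a, ha, hpa, rfl⟩ := hs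
  obtain ⟨b, hb, hpb, rfl⟩ := ht
  obtain ⟨Na, hNa⟩ := ha.bddAbove
  obtain ⟨Nb, hNb⟩ := hb.bddAbove
  set N := max Na Nb + 1 with hN
  have hfa : Function.mulSupport a ⊆ Set.Iio N := by
    intro n hn; have := hNa hn; simp only [Set.mem_Iio]; omega
  have hfb : Function.mulSupport b ⊆ Set.Iio N := by
    intro n hn; have := hNb hn; simp only [Set.mem_Iio]; omega
  refine ⟨fun n => if n < N then a n else b (n - N), ?_, ?_, ?_⟩
  · apply Set.Finite.subset (Set.finite_Iio (N + N))
    intro n hn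
    simp only [Set.mem_setOf_eq] at hn
    by_cases hlt : n < N
    · simp only [Set.mem_Iio]; omega
    · rw [if_neg hlt] at hn
      have := hfb (Function.mem_mulSupport.mpr hn)
      simp only [Set.mem_Iio] at this ⊢; omega
  · rw [concat_finprod N a b hfa hfb, hpa, hpb]
  · have : (fun n => ρ (if n < N then a n else b (n - N)))
        = fun n => if n < N then ρ (a n) else ρ (b (n - N)) := by
      funext n; split <;> rfl
    rw [this, concat_finprod N _ _
      ((mulSupport_comp h a).trans hfa) ((mulSupport_comp h b).trans hfb)]

lemma metricH_submul {ρ : G → ℝ} (h : IsHeight ρ) (α β : G) :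
    metricH ρ (α * β) ≤ metricH ρ α * metricH ρ β := by
  have hA : (0:ℝ) < metricH ρ α := lt_of_lt_of_le one_pos (one_le_metricH h α)
  have key : ∀ t ∈ S ρ β, metricH ρ (α * β) ≤ metricH ρ α * t := by
    intro t ht
    have htpos : (0:ℝ) < t := lt_of_lt_of_le one_pos (one_le_mem h ht)
    rw [← div_le_iff₀ htpos]
    apply le_csInf (S_nonempty h α)
    intro s hs
    rw [div_le_iff₀ htpos]
    exact csInf_le (S_bddBelow h (α * β)) (mul_mem h hs ht)
  have h2 : ∀ t ∈ S ρ β, metricH ρ (α * β) / metricH ρ α ≤ t := by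
    intro t ht
    rw [div_le_iff₀ hA]
    exact le_of_le_of_eq (key t ht) (mul_comm _ _)
  have h3 := le_csInf (S_nonempty h β) h2
  rw [div_le_iff₀ hA] at h3
  exact le_of_le_of_eq h3 (mul_comm _ _)

lemma height_le_finprod {ρ : G → ℝ} (hm : IsMetricHeight ρ) (a : ℕ → G)
    (ha : {n | a n ≠ 1}.Finite) : ρ (∏ᶠ n, a n) ≤ ∏ᶠ n, ρ (a n) := by
  have hsub : Function.mulSupport a ⊆ ↑ha.toFinset := by intro n hn; simpa using hn
  have hsub' : Function.mulSupport (fun n => ρ (a n)) ⊆ ↑ha.toFinset :=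
    (mulSupport_comp hm.1 a).trans hsub
  rw [finprod_eq_prod_of_mulSupport_subset _ hsub,
      finprod_eq_prod_of_mulSupport_subset _ hsub']
  induction ha.toFinset using Finset.cons_induction with
  | empty => simp [hm.1.1]
  | cons i s hi ih =>
    rw [Finset.prod_cons, Finset.prod_cons]
    calc ρ (a i * ∏ j ∈ s, a j) ≤ ρ (a i) * ρ (∏ j ∈ s, a j) := hm.2 _ _
    _ ≤ ρ (a i) * ∏ j ∈ s, ρ (a j) :=
      mul_le_mul_of_nonneg_left ih (le_trans zero_le_one (hm.1.2.1 _))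

lemma metricH_eq_iff {ρ : G → ℝ} (h : IsHeight ρ) :
    metricH ρ = ρ ↔ IsMetricHeight ρ := by
  constructor
  · intro hEq
    refine ⟨h, fun α β => ?_⟩
    have : metricH ρ (α * β) ≤ ρ α * ρ β :=
      csInf_le (S_bddBelow h (α * β)) (mul_mem h (mem_self h α) (mem_self h β))
    rwa [hEq] at this
  · intro hm
    funext α
    refine le_antisymm (metricH_le_self h α) ?_
    apply le_csInf (S_nonempty h α)
    rintro t ⟨a, ha, hprod, rfl⟩
    calc ρ α = ρ (∏ᶠ n, a n) := by rw [hprod]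
    _ ≤ ∏ᶠ n, ρ (a n) := height_le_finprod hm a ha

lemma metricH_isHeight {ρ : G → ℝ} (h : IsHeight ρ) : IsHeight (metricH ρ) :=
  ⟨metricH_one h, one_le_metricH h, metricH_inv h⟩

lemma metricH_isMetricHeight {ρ : G → ℝ} (h : IsHeight ρ) :
    IsMetricHeight (metricH ρ) :=
  ⟨metricH_isHeight h, metricH_submul h⟩

end MetricHAux

/-- For a height `ρ` on `G`: `ρ = ρ₁` iff `ρ` is a metric height; consequently
`(ρ₁)₁ = ρ₁`. -/
theorem metricH_eq_iff_and_idem (ρ : G → ℝ) (h : IsHeight ρ) :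
    (metricH ρ = ρ ↔ IsMetricHeight ρ) ∧ metricH (metricH ρ) = metricH ρ := by
  exact ⟨MetricHAux.metricH_eq_iff h,
    (MetricHAux.metricH_eq_iff (MetricHAux.metricH_isHeight h)).mpr
      (MetricHAux.metricH_isMetricHeight h)⟩
end
end

section
/- Let G be an abelian group and ρ a height on G. Then ρ_∞ is a strong metric height on G, and ρ_∞(α) ≤ ρ₁(α) for all α ∈ G. -/
/-!
A factorisation of `α` has only finitely many factors different from `1`, all of height at least
`1`, so its largest height is a real number in `[1, ∞)`, bounded by the product of the heights;
taking infima gives `1 ≤ ρ_∞ ≤ ρ₁`. Inverting every factor of a factorisation of `α` factorises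
`α⁻¹` with the same heights, and interleaving factorisations of `α` and `β` factorises `αβ` with
largest height the larger of the two maxima; taking infima gives `ρ_∞(α⁻¹) = ρ_∞(α)` and
`ρ_∞(αβ) ≤ max {ρ_∞(α), ρ_∞(β)}`.
-/

noncomputable section

variable {G : Type*} [CommGroup G]

open Function Set

theorem Function.HasFiniteMulSupport.finite_range {ι M : Type*} [One M] {f : ι → M}
    (hf : f.HasFiniteMulSupport) : (range f).Finite :=
  ((hf.image f).insert 1).subset (range_subset_insert_image_mulSupport f)

theorem Function.HasFiniteMulSupport.sumElim {ι κ M : Type*} [One M] {f : ι → M} {g : κ → M}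
    (hf : f.HasFiniteMulSupport) (hg : g.HasFiniteMulSupport) :
    (Sum.elim f g).HasFiniteMulSupport :=
  ((hf.image Sum.inl).union (hg.image Sum.inr)).subset <| by
    rintro (i | j) hx
    exacts [Or.inl ⟨i, hx, rfl⟩, Or.inr ⟨j, hx, rfl⟩]

theorem finprod_sumElim {ι κ M : Type*} [CommMonoid M] {f : ι → M} {g : κ → M}
    (hf : f.HasFiniteMulSupport) (hg : g.HasFiniteMulSupport) :
    ∏ᶠ x, Sum.elim f g x = (∏ᶠ i, f i) * ∏ᶠ j, g j := by
  classical
  rw [finprod_eq_prod_of_mulSupport_subset f hf.coe_toFinset.ge,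
    finprod_eq_prod_of_mulSupport_subset g hg.coe_toFinset.ge,
    finprod_eq_prod_of_mulSupport_subset (s := hf.toFinset.disjSum hg.toFinset),
    Finset.prod_disjSum]
  · rfl
  · rintro (i | j) hx
    exacts [Finset.inl_mem_disjSum.2 (hf.mem_toFinset.2 hx),
      Finset.inr_mem_disjSum.2 (hg.mem_toFinset.2 hx)]

theorem le_finprod_of_one_le {ι M : Type*} [CommMonoidWithZero M] [PartialOrder M]
    [ZeroLEOneClass M] [PosMulMono M] {f : ι → M} (hf : ∀ i, 1 ≤ f i)
    (hfin : f.HasFiniteMulSupport) (i : ι) : f i ≤ ∏ᶠ j, f j := by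
  rw [← mul_finprod_cond_ne i hfin]
  exact le_mul_of_one_le_right (zero_le_one.trans (hf i))
    (one_le_finprod fun j => one_le_finprod fun _ => hf j)

theorem Pi.hasFiniteMulSupport_mulSingle {ι M : Type*} [One M] [DecidableEq ι] (i : ι) (x : M) :
    (Pi.mulSingle i x).HasFiniteMulSupport :=
  (finite_singleton i).subset Pi.mulSupport_mulSingle_subset

theorem finprod_mulSingle {ι M : Type*} [CommMonoid M] [DecidableEq ι] (i : ι) (x : M) :
    ∏ᶠ j, Pi.mulSingle i x j = x := by
  rw [finprod_eq_single _ i fun j hj => by simp [hj], Pi.mulSingle_eq_same]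

variable {ρ : G → ℝ} {a b : ℕ → G} {α β : G} {x : ℝ}

theorem le_strongH
    (H : ∀ a : ℕ → G, a.HasFiniteMulSupport → ∏ᶠ n, a n = α → x ≤ ⨆ n, ρ (a n)) :
    x ≤ strongH ρ α := by
  classical
  refine le_csInf ⟨_, Pi.mulSingle 0 α, Pi.hasFiniteMulSupport_mulSingle 0 α,
    finprod_mulSingle 0 α, rfl⟩ ?_
  rintro _ ⟨a, ha, hα, rfl⟩
  exact H a ha hα

theorem exists_iSup_lt_of_strongH_lt (hlt : strongH ρ α < x) :
    ∃ a : ℕ → G, a.HasFiniteMulSupport ∧ ∏ᶠ n, a n = α ∧ ⨆ n, ρ (a n) < x := by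
  by_contra! H
  exact hlt.not_ge (le_strongH H)

namespace IsHeight

theorem bddAbove_range_comp (h : IsHeight ρ) (ha : a.HasFiniteMulSupport) :
    BddAbove (range fun n => ρ (a n)) :=
  (ha.fun_comp h.1).finite_range.bddAbove

theorem one_le_iSup_comp (h : IsHeight ρ) (ha : a.HasFiniteMulSupport) :
    1 ≤ ⨆ n, ρ (a n) :=
  (h.2.1 (a 0)).trans (le_ciSup (h.bddAbove_range_comp ha) 0)

theorem strongH_le_iSup (h : IsHeight ρ) (ha : a.HasFiniteMulSupport) (hα : ∏ᶠ n, a n = α) :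
    strongH ρ α ≤ ⨆ n, ρ (a n) :=
  csInf_le ⟨1, by rintro _ ⟨b, hb, -, rfl⟩; exact h.one_le_iSup_comp hb⟩ ⟨a, ha, hα, rfl⟩

theorem one_le_strongH (h : IsHeight ρ) (α : G) : 1 ≤ strongH ρ α :=
  le_strongH fun _ ha _ => h.one_le_iSup_comp ha

theorem strongH_one (h : IsHeight ρ) : strongH ρ 1 = 1 := by
  refine le_antisymm ?_ (h.one_le_strongH 1)
  calc strongH ρ 1 ≤ ⨆ _ : ℕ, ρ 1 := h.strongH_le_iSup hasFiniteMulSupport_one finprod_one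
    _ = 1 := by rw [ciSup_const, h.1]

theorem strongH_inv_le (h : IsHeight ρ) (α : G) : strongH ρ α⁻¹ ≤ strongH ρ α :=
  le_strongH fun a ha hα => by
    simpa only [h.2.2] using
      h.strongH_le_iSup (a := fun n => (a n)⁻¹) ha.inv (by rw [finprod_inv_distrib, hα])

theorem strongH_inv (h : IsHeight ρ) (α : G) : strongH ρ α⁻¹ = strongH ρ α :=
  le_antisymm (h.strongH_inv_le α) (by simpa only [inv_inv] using h.strongH_inv_le α⁻¹)

theorem strongH_mul_le_max_iSup (h : IsHeight ρ) (ha : a.HasFiniteMulSupport)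
    (hb : b.HasFiniteMulSupport) (hα : ∏ᶠ n, a n = α) (hβ : ∏ᶠ n, b n = β) :
    strongH ρ (α * β) ≤ max (⨆ n, ρ (a n)) (⨆ n, ρ (b n)) := by
  let e := Equiv.natSumNatEquivNat.symm
  have hprod : ∏ᶠ n, Sum.elim a b (e n) = α * β := by
    rw [finprod_comp_equiv e, finprod_sumElim ha hb, hα, hβ]
  refine (h.strongH_le_iSup ((ha.sumElim hb).comp_of_injective e.injective) hprod).trans ?_
  refine ciSup_le fun n => ?_
  change ρ (Sum.elim a b (e n)) ≤ _
  rcases e n with i | j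
  · exact le_max_of_le_left (le_ciSup (h.bddAbove_range_comp ha) i)
  · exact le_max_of_le_right (le_ciSup (h.bddAbove_range_comp hb) j)

theorem strongH_mul_le (h : IsHeight ρ) (α β : G) :
    strongH ρ (α * β) ≤ max (strongH ρ α) (strongH ρ β) := by
  by_contra! hlt
  obtain ⟨a, ha, hα, hlta⟩ := exists_iSup_lt_of_strongH_lt (max_lt_iff.1 hlt).1
  obtain ⟨b, hb, hβ, hltb⟩ := exists_iSup_lt_of_strongH_lt (max_lt_iff.1 hlt).2
  exact (h.strongH_mul_le_max_iSup ha hb hα hβ).not_gt (max_lt hlta hltb)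

theorem strongH_le_metricH (h : IsHeight ρ) (α : G) : strongH ρ α ≤ metricH ρ α := by
  classical
  refine le_csInf ⟨_, Pi.mulSingle 0 α, Pi.hasFiniteMulSupport_mulSingle 0 α,
    finprod_mulSingle 0 α, rfl⟩ ?_
  rintro _ ⟨a, (ha : a.HasFiniteMulSupport), hα, rfl⟩
  refine (h.strongH_le_iSup ha hα).trans (ciSup_le fun m => ?_)
  exact le_finprod_of_one_le (fun n => h.2.1 (a n)) (ha.fun_comp h.1) m

end IsHeight

/-- If `ρ` is a height on `G`, then `ρ_∞` is a strong metric height on `G` with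
`ρ_∞ ≤ ρ₁`. -/
theorem strongH_isStrongMetricHeight_and_le (ρ : G → ℝ) (h : IsHeight ρ) :
    IsStrongMetricHeight (strongH ρ) ∧ ∀ α : G, strongH ρ α ≤ metricH ρ α :=
  ⟨⟨⟨h.strongH_one, h.one_le_strongH, h.strongH_inv⟩, h.strongH_mul_le⟩, h.strongH_le_metricH⟩
end
end

section
/- Let G be an abelian group, ρ a height on G, and σ a strong metric height on G with σ(α) ≤ ρ(α) for all α ∈ G. Then σ(α) ≤ ρ_∞(α) for all α ∈ G; that is, ρ_∞ is the largest strong metric height bounded above by ρ. -/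
noncomputable section

variable {G : Type*} [CommGroup G]

lemma sigma_prod_le {σ : G → ℝ} (hσ : IsStrongMetricHeight σ) (f : ℕ → G) (B : ℝ)
    (hB : 1 ≤ B) (s : Finset ℕ) (h : ∀ i ∈ s, σ (f i) ≤ B) :
    σ (∏ i ∈ s, f i) ≤ B := by
  induction s using Finset.induction_on with
  | empty => simpa [hσ.1.1] using hB
  | @insert a t hx ih =>
    rw [Finset.prod_insert hx]
    refine (hσ.2 _ _).trans (max_le (h a (Finset.mem_insert_self _ _)) ?_)
    exact ih fun i hi => h i (Finset.mem_insert_of_mem hi)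

/-- If `ρ` is a height on `G` and `σ` is a strong metric height with `σ ≤ ρ`, then
`σ ≤ ρ_∞`: `ρ_∞` is the largest strong metric height bounded above by `ρ`. -/
theorem strongH_is_largest (ρ σ : G → ℝ) (hρ : IsHeight ρ)
    (hσ : IsStrongMetricHeight σ) (hle : ∀ α : G, σ α ≤ ρ α) :
    ∀ α : G, σ α ≤ strongH ρ α := by
  intro α
  apply le_csInf
  · refine ⟨ρ α, fun n => if n = 0 then α else 1, ?_, ?_, ?_⟩
    · exact (Set.finite_singleton 0).subset fun n hn => by
        by_contra h; simp_all
    · rw [finprod_eq_prod_of_mulSupport_subset _ (s := {0})]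
      · simp
      · intro n hn
        simp only [Function.mem_mulSupport] at hn
        by_contra h; simp_all
    · have hb : BddAbove (Set.range fun n => ρ (if n = 0 then α else 1)) := by
        refine ⟨max (ρ α) (ρ 1), ?_⟩
        rintro x ⟨n, rfl⟩
        by_cases h : n = 0 <;> simp [h]
      have h1 : (⨆ n, ρ (if n = 0 then α else 1)) = ρ α := by
        apply le_antisymm
        · refine ciSup_le fun n => ?_
          by_cases h : n = 0 <;> simp [h, hρ.1 ▸ hρ.2.1 α]
        · exact le_ciSup hb 0 |>.trans_eq (by simp)
      exact h1.symm
  · rintro t ⟨a, hfin, hprod, rfl⟩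
    have hb : BddAbove (Set.range fun n => ρ (a n)) := by
      have : (Set.range fun n => ρ (a n)) ⊆ ρ '' (insert 1 (a '' {n | a n ≠ 1})) := by
        rintro x ⟨n, rfl⟩
        by_cases h : a n = 1
        · exact ⟨1, Set.mem_insert _ _, by simp [h]⟩
        · exact ⟨a n, Set.mem_insert_of_mem _ ⟨n, h, rfl⟩, rfl⟩
      exact (((hfin.image a).insert 1).image ρ).bddAbove.mono this
    have h1 : 1 ≤ ⨆ n, ρ (a n) :=
      (hρ.2.1 (a 0)).trans (le_ciSup hb 0)
    have hsub : Function.mulSupport a ⊆ hfin.toFinset := by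
      intro n hn; simpa using hn
    rw [← hprod, finprod_eq_prod_of_mulSupport_subset _ hsub]
    exact sigma_prod_le hσ a _ h1 _ fun i _ =>
      (hle (a i)).trans (le_ciSup hb i)
end
end

section
/- Let G be an abelian group and ρ a height on G. Then ρ = ρ_∞ if and only if ρ is a strong metric height. -/
noncomputable section

variable {G : Type*} [CommGroup G]

private lemma height_range_finite (ρ : G → ℝ) (a : ℕ → G)
    (hf : {n | a n ≠ 1}.Finite) : (Set.range fun n => ρ (a n)).Finite := by
  have : (Set.range fun n => ρ (a n)) ⊆ insert (ρ 1) (ρ '' (a '' {n | a n ≠ 1})) := by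
    rintro x ⟨n, rfl⟩
    by_cases hn : a n = 1
    · simp [hn]
    · exact Set.mem_insert_iff.2 (Or.inr ⟨a n, ⟨n, hn, rfl⟩, rfl⟩)
  exact Set.Finite.subset (((hf.image a).image ρ).insert (ρ 1)) this

private lemma prod_le_csSup (ρ : G → ℝ) (hs : IsStrongMetricHeight ρ) (a : ℕ → G)
    (hb : BddAbove (Set.range fun n => ρ (a n))) (s : Finset ℕ) :
    ρ (∏ i ∈ s, a i) ≤ ⨆ n, ρ (a n) := by
  induction s using Finset.cons_induction with
  | empty =>
      simp only [Finset.prod_empty, hs.1.1]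
      exact le_trans (hs.1.2.1 (a 0)) (le_ciSup hb 0)
  | cons i s hi ih =>
      rw [Finset.prod_cons]
      exact le_trans (hs.2 _ _) (max_le (le_ciSup hb i) ih)

/-- For a height `ρ` on `G`: `ρ = ρ_∞` if and only if `ρ` is a strong metric height. -/
theorem strongH_eq_iff (ρ : G → ℝ) (h : IsHeight ρ) :
    strongH ρ = ρ ↔ IsStrongMetricHeight ρ := by
  obtain ⟨h1, hge, hinv⟩ := h
  constructor
  · intro heq
    refine ⟨⟨h1, hge, hinv⟩, fun α β => ?_⟩
    set a : ℕ → G := fun n => if n = 0 then α else if n = 1 then β else 1 with ha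
    have hsupp : Function.mulSupport a ⊆ (({0, 1} : Finset ℕ) : Set ℕ) := by
      intro n hn
      simp only [Function.mem_mulSupport, ha] at hn
      by_contra hc
      simp only [Finset.coe_insert, Finset.coe_singleton, Set.mem_insert_iff,
        Set.mem_singleton_iff, not_or] at hc
      simp [hc.1, hc.2] at hn
    have hfin : {n | a n ≠ 1}.Finite :=
      Set.Finite.subset (Finset.finite_toSet _) hsupp
    have hprod : (∏ᶠ n, a n) = α * β := by
      rw [finprod_eq_prod_of_mulSupport_subset a hsupp]
      simp [ha]
    have hmem : (⨆ n, ρ (a n)) ∈ {t : ℝ | ∃ b : ℕ → G, {n | b n ≠ 1}.Finite ∧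
        (∏ᶠ n, b n) = α * β ∧ t = ⨆ n, ρ (b n)} := ⟨a, hfin, hprod, rfl⟩
    have hbdd : BddBelow {t : ℝ | ∃ b : ℕ → G, {n | b n ≠ 1}.Finite ∧
        (∏ᶠ n, b n) = α * β ∧ t = ⨆ n, ρ (b n)} := by
      refine ⟨1, ?_⟩
      rintro t ⟨b, hb, -, rfl⟩
      have hba : BddAbove (Set.range fun n => ρ (b n)) :=
        (height_range_finite ρ b hb).bddAbove
      exact le_trans (hge (b 0)) (le_ciSup hba 0)
    have hle : strongH ρ (α * β) ≤ ⨆ n, ρ (a n) := csInf_le hbdd hmem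
    have hsup : (⨆ n, ρ (a n)) ≤ max (ρ α) (ρ β) := by
      refine ciSup_le fun n => ?_
      rcases Nat.eq_or_lt_of_le (Nat.zero_le n) with h0 | h0
      · simp [ha, ← h0]
      rcases Nat.eq_or_lt_of_le h0 with h1' | h1'
      · simp [ha, ← h1']
      · have hn0 : n ≠ 0 := by omega
        have hn1 : n ≠ 1 := by omega
        simp only [ha, if_neg hn0, if_neg hn1, h1]
        exact le_max_of_le_left (hge α)
    calc ρ (α * β) = strongH ρ (α * β) := by rw [heq]
      _ ≤ ⨆ n, ρ (a n) := hle
      _ ≤ max (ρ α) (ρ β) := hsup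
  · intro hs
    funext α
    set S := {t : ℝ | ∃ b : ℕ → G, {n | b n ≠ 1}.Finite ∧
        (∏ᶠ n, b n) = α ∧ t = ⨆ n, ρ (b n)} with hS
    set a : ℕ → G := fun n => if n = 0 then α else 1 with ha
    have hsupp : Function.mulSupport a ⊆ (({0} : Finset ℕ) : Set ℕ) := by
      intro n hn
      simp only [Function.mem_mulSupport, ha] at hn
      by_contra hc
      simp only [Finset.coe_singleton, Set.mem_singleton_iff] at hc
      simp [hc] at hn
    have hfin : {n | a n ≠ 1}.Finite :=
      Set.Finite.subset (Finset.finite_toSet _) hsupp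
    have hprod : (∏ᶠ n, a n) = α := by
      rw [finprod_eq_prod_of_mulSupport_subset a hsupp]
      simp [ha]
    have hba : BddAbove (Set.range fun n => ρ (a n)) :=
      (height_range_finite ρ a hfin).bddAbove
    have hsup : (⨆ n, ρ (a n)) = ρ α := by
      refine le_antisymm (ciSup_le fun n => ?_) ?_
      · by_cases hn : n = 0
        · simp [ha, hn]
        · simp only [ha, if_neg hn, h1]
          exact hge α
      · have := le_ciSup hba 0
        simpa [ha] using this
    have hmem : ρ α ∈ S := ⟨a, hfin, hprod, hsup.symm⟩
    have hlb : ∀ t ∈ S, ρ α ≤ t := by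
      rintro t ⟨b, hb, hbprod, rfl⟩
      have hba' : BddAbove (Set.range fun n => ρ (b n)) :=
        (height_range_finite ρ b hb).bddAbove
      have hms : Function.mulSupport b = {n | b n ≠ 1} := rfl
      have : (∏ᶠ n, b n) = ∏ i ∈ hb.toFinset, b i := by
        apply finprod_eq_prod_of_mulSupport_subset
        rw [hms]
        simp
      rw [this] at hbprod
      calc ρ α = ρ (∏ i ∈ hb.toFinset, b i) := by rw [hbprod]
        _ ≤ ⨆ n, ρ (b n) := prod_le_csSup ρ hs b hba' _
    exact le_antisymm (csInf_le ⟨ρ α, hlb⟩ hmem) (le_csInf ⟨ρ α, hmem⟩ hlb)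
end
end

section
/- Let G be an abelian group and ρ a height on G. Then ρ_∞ = (ρ₁)_∞ = (ρ_∞)₁ = (ρ_∞)_∞, where the subscripts 1 and ∞ denote the metric and strong metric height constructions applied to the indicated height. -/
noncomputable section

variable {G : Type*} [CommGroup G]

/-! ### Auxiliary material -/

/-- The weak part of the height axioms that is actually used. -/
def IsH1 (ρ : G → ℝ) : Prop := ρ 1 = 1 ∧ ∀ α : G, 1 ≤ ρ α

namespace StrongHAux

variable {ρ σ : G → ℝ}

lemma aux_bddAbove (ρ : G → ℝ) (a : ℕ → G) (hfin : {n | a n ≠ 1}.Finite) :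
    BddAbove (Set.range fun n => ρ (a n)) := by
  have h : Set.range (fun n => ρ (a n)) ⊆
      insert (ρ 1) ((fun n => ρ (a n)) '' {n | a n ≠ 1}) := by
    rintro t ⟨n, rfl⟩
    by_cases h : a n = 1
    · simp [h]
    · exact Set.mem_insert_of_mem _ ⟨n, h, rfl⟩
  exact BddAbove.mono h ((hfin.image _).insert _).bddAbove

lemma aux_support (hρ : IsH1 ρ) (a : ℕ → G) :
    Function.mulSupport (fun n => ρ (a n)) ⊆ {n | a n ≠ 1} := by
  intro n hn
  simp only [Function.mem_mulSupport] at hn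
  intro h
  exact hn (by rw [h, hρ.1])

lemma aux_one_le_prod (hρ : IsH1 ρ) (a : ℕ → G) (s : Finset ℕ) :
    (1 : ℝ) ≤ ∏ n ∈ s, ρ (a n) := by
  calc (1 : ℝ) = ∏ _n ∈ s, (1 : ℝ) := by simp
    _ ≤ ∏ n ∈ s, ρ (a n) :=
      Finset.prod_le_prod (fun i _ => zero_le_one) (fun i _ => hρ.2 _)

lemma aux_one_le_finprod (hρ : IsH1 ρ) (a : ℕ → G) (hfin : {n | a n ≠ 1}.Finite) :
    (1 : ℝ) ≤ ∏ᶠ n, ρ (a n) := by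
  rw [finprod_eq_prod_of_mulSupport_subset _ (s := hfin.toFinset)
    (by rw [Set.Finite.coe_toFinset]; exact aux_support hρ a)]
  exact aux_one_le_prod hρ a _

lemma aux_le_finprod (hρ : IsH1 ρ) (a : ℕ → G) (hfin : {n | a n ≠ 1}.Finite) (k : ℕ) :
    ρ (a k) ≤ ∏ᶠ n, ρ (a n) := by
  classical
  have hsub : Function.mulSupport (fun n => ρ (a n)) ⊆ ↑(insert k hfin.toFinset) := by
    intro n hn
    have := aux_support hρ a hn
    simp only [Finset.coe_insert, Set.mem_insert_iff, Finset.mem_coe,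
      Set.Finite.mem_toFinset]
    right; exact this
  rw [finprod_eq_prod_of_mulSupport_subset _ hsub,
    ← Finset.mul_prod_erase _ _ (Finset.mem_insert_self k hfin.toFinset)]
  nth_rewrite 1 [← mul_one (ρ (a k))]
  exact mul_le_mul_of_nonneg_left (aux_one_le_prod hρ a _)
    (le_trans zero_le_one (hρ.2 _))

lemma aux_one_le_ciSup (hρ : IsH1 ρ) (a : ℕ → G) (hfin : {n | a n ≠ 1}.Finite) :
    (1 : ℝ) ≤ ⨆ n, ρ (a n) :=
  le_trans (hρ.2 (a 0)) (le_ciSup (aux_bddAbove ρ a hfin) 0)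

/-! The single-term representation. -/

def single (α : G) : ℕ → G := fun n => if n = 0 then α else 1

lemma single_fin (α : G) : {n | single α n ≠ 1}.Finite := by
  apply (Set.finite_singleton 0).subset
  intro n hn
  simp only [Set.mem_setOf_eq, single] at hn
  by_contra h
  exact hn (if_neg h)

lemma single_prod (α : G) : (∏ᶠ n, single α n) = α := by
  simp only [single]
  rw [finprod_eq_single _ 0 (fun n hn => if_neg hn)]
  simp

lemma strongH_bddBelow (hρ : IsH1 ρ) (α : G) :
    BddBelow {t : ℝ | ∃ a : ℕ → G, {n | a n ≠ 1}.Finite ∧ (∏ᶠ n, a n) = α ∧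
      t = ⨆ n, ρ (a n)} := by
  refine ⟨1, ?_⟩
  rintro t ⟨a, hfin, -, rfl⟩
  exact aux_one_le_ciSup hρ a hfin

lemma strongH_nonempty (ρ : G → ℝ) (α : G) :
    {t : ℝ | ∃ a : ℕ → G, {n | a n ≠ 1}.Finite ∧ (∏ᶠ n, a n) = α ∧
      t = ⨆ n, ρ (a n)}.Nonempty :=
  ⟨_, single α, single_fin α, single_prod α, rfl⟩

lemma metricH_bddBelow (hρ : IsH1 ρ) (α : G) :
    BddBelow {t : ℝ | ∃ a : ℕ → G, {n | a n ≠ 1}.Finite ∧ (∏ᶠ n, a n) = α ∧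
      t = ∏ᶠ n, ρ (a n)} := by
  refine ⟨1, ?_⟩
  rintro t ⟨a, hfin, -, rfl⟩
  exact aux_one_le_finprod hρ a hfin

lemma metricH_nonempty (ρ : G → ℝ) (α : G) :
    {t : ℝ | ∃ a : ℕ → G, {n | a n ≠ 1}.Finite ∧ (∏ᶠ n, a n) = α ∧
      t = ∏ᶠ n, ρ (a n)}.Nonempty :=
  ⟨_, single α, single_fin α, single_prod α, rfl⟩

lemma strongH_le (hρ : IsH1 ρ) {a : ℕ → G} (hfin : {n | a n ≠ 1}.Finite) :
    strongH ρ (∏ᶠ n, a n) ≤ ⨆ n, ρ (a n) :=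
  csInf_le (strongH_bddBelow hρ _) ⟨a, hfin, rfl, rfl⟩

lemma metricH_le (hρ : IsH1 ρ) {a : ℕ → G} (hfin : {n | a n ≠ 1}.Finite) :
    metricH ρ (∏ᶠ n, a n) ≤ ∏ᶠ n, ρ (a n) :=
  csInf_le (metricH_bddBelow hρ _) ⟨a, hfin, rfl, rfl⟩

lemma one_le_strongH (hρ : IsH1 ρ) (α : G) : 1 ≤ strongH ρ α := by
  refine le_csInf (strongH_nonempty ρ α) ?_
  rintro t ⟨a, hfin, -, rfl⟩
  exact aux_one_le_ciSup hρ a hfin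

lemma one_le_metricH (hρ : IsH1 ρ) (α : G) : 1 ≤ metricH ρ α := by
  refine le_csInf (metricH_nonempty ρ α) ?_
  rintro t ⟨a, hfin, -, rfl⟩
  exact aux_one_le_finprod hρ a hfin

lemma strongH_le_self (hρ : IsH1 ρ) (α : G) : strongH ρ α ≤ ρ α := by
  have h := strongH_le hρ (single_fin α)
  rw [single_prod α] at h
  refine h.trans (ciSup_le fun n => ?_)
  by_cases hn : n = 0
  · simp [single, hn]
  · simp [single, hn, hρ.1, hρ.2 α]

lemma metricH_le_self (hρ : IsH1 ρ) (α : G) : metricH ρ α ≤ ρ α := by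
  have h := metricH_le hρ (single_fin α)
  rw [single_prod α] at h
  refine h.trans ?_
  rw [finprod_eq_single _ 0 (fun n hn => by simp [single, if_neg hn, hρ.1])]
  simp [single]

lemma isH1_strongH (hρ : IsH1 ρ) : IsH1 (strongH ρ) :=
  ⟨le_antisymm (by simpa [hρ.1] using strongH_le_self hρ 1) (one_le_strongH hρ 1),
    one_le_strongH hρ⟩

lemma isH1_metricH (hρ : IsH1 ρ) : IsH1 (metricH ρ) :=
  ⟨le_antisymm (by simpa [hρ.1] using metricH_le_self hρ 1) (one_le_metricH hρ 1),
    one_le_metricH hρ⟩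

lemma strongH_le_metricH (hρ : IsH1 ρ) (α : G) : strongH ρ α ≤ metricH ρ α := by
  refine le_csInf (metricH_nonempty ρ α) ?_
  rintro t ⟨a, hfin, hprod, rfl⟩
  have h := strongH_le hρ hfin
  rw [hprod] at h
  exact h.trans (ciSup_le fun k => aux_le_finprod hρ a hfin k)

lemma strongH_mono (hσ : IsH1 σ) (hle : ∀ x, σ x ≤ ρ x) (α : G) :
    strongH σ α ≤ strongH ρ α := by
  refine le_csInf (strongH_nonempty ρ α) ?_
  rintro t ⟨a, hfin, hprod, rfl⟩
  have h := strongH_le hσ hfin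
  rw [hprod] at h
  exact h.trans (ciSup_le fun k => (hle _).trans (le_ciSup (aux_bddAbove ρ a hfin) k))

lemma real_le_of_forall_pos_le_add {a b : ℝ} (h : ∀ ε : ℝ, 0 < ε → a ≤ b + ε) : a ≤ b := by
  by_contra hc
  push_neg at hc
  have := h ((a - b) / 2) (by linarith)
  linarith

lemma strongH_le_strongH_strongH (hρ : IsH1 ρ) (α : G) :
    strongH ρ α ≤ strongH (strongH ρ) α := by
  classical
  refine le_csInf (strongH_nonempty _ α) ?_
  rintro t ⟨a, hfin, hprod, rfl⟩
  refine real_le_of_forall_pos_le_add fun ε hε => ?_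
  have hchoice : ∀ n : ℕ, ∃ b : ℕ → G, {m | b m ≠ 1}.Finite ∧ (∏ᶠ m, b m) = a n ∧
      (⨆ m, ρ (b m)) < strongH ρ (a n) + ε := by
    intro n
    obtain ⟨x, hx, hlt⟩ := Real.lt_sInf_add_pos (strongH_nonempty ρ (a n)) hε
    obtain ⟨b, hb1, hb2, rfl⟩ := hx
    exact ⟨b, hb1, hb2, hlt⟩
  choose b hbfin hbprod hbsup using hchoice
  set d : ℕ × ℕ → G := fun p => if a p.1 = 1 then 1 else b p.1 p.2 with hd
  have hdfin : (Function.mulSupport d).Finite := by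
    apply Set.Finite.subset (hfin.biUnion (fun n _ => (hbfin n).image (Prod.mk n)))
    rintro ⟨n, m⟩ hp
    simp only [Function.mem_mulSupport, hd] at hp
    by_cases hn : a n = 1
    · exact absurd (if_pos hn) hp
    · rw [if_neg hn] at hp
      exact Set.mem_biUnion hn ⟨m, hp, rfl⟩
  -- the combined representation
  set e : ℕ × ℕ ≃ ℕ := Nat.pairEquiv
  set c : ℕ → G := fun k => d (e.symm k) with hc
  have hcfin : {k | c k ≠ 1}.Finite := by
    have : {k | c k ≠ 1} = e.symm ⁻¹' Function.mulSupport d := rfl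
    rw [this]
    exact Set.Finite.preimage e.symm.injective.injOn hdfin
  have hcprod : (∏ᶠ k, c k) = α := by
    have h1 : (∏ᶠ k, c k) = ∏ᶠ p, d p := finprod_comp_equiv e.symm (f := d)
    rw [h1, finprod_curry d hdfin]
    have h2 : ∀ n, (∏ᶠ m, d (n, m)) = a n := by
      intro n
      by_cases hn : a n = 1
      · simp [hd, hn]
      · have hfun : (fun m => d (n, m)) = b n := by
          funext m; simp [hd, hn]
        rw [finprod_congr (fun m => congrFun hfun m)]
        exact hbprod n
    rw [finprod_congr h2]
    exact hprod
  have h1t : (1 : ℝ) ≤ ⨆ n, strongH ρ (a n) :=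
    aux_one_le_ciSup (isH1_strongH hρ) a hfin
  have hsup_le : ∀ p : ℕ × ℕ, ρ (d p) ≤ (⨆ n, strongH ρ (a n)) + ε := by
    rintro ⟨n, m⟩
    by_cases hn : a n = 1
    · simp only [hd, if_pos hn, hρ.1]
      linarith
    · have h1 : ρ (b n m) ≤ ⨆ m', ρ (b n m') :=
        le_ciSup (aux_bddAbove ρ (b n) (hbfin n)) m
      have h2 := hbsup n
      have h3 : strongH ρ (a n) ≤ ⨆ n', strongH ρ (a n') :=
        le_ciSup (aux_bddAbove (strongH ρ) a hfin) n
      simp only [hd, if_neg hn]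
      linarith
  have hkey := strongH_le hρ hcfin
  rw [hcprod] at hkey
  exact hkey.trans (ciSup_le fun k => hsup_le (e.symm k))

end StrongHAux

open StrongHAux in
/-- For a height `ρ` on `G`: `ρ_∞ = (ρ₁)_∞ = (ρ_∞)₁ = (ρ_∞)_∞`. -/
theorem strongH_idem (ρ : G → ℝ) (h : IsHeight ρ) :
    strongH ρ = strongH (metricH ρ) ∧ strongH ρ = metricH (strongH ρ) ∧
      strongH ρ = strongH (strongH ρ) := by
  have hρ : IsH1 ρ := ⟨h.1, h.2.1⟩
  have hS := isH1_strongH hρ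
  have hM := isH1_metricH hρ
  have key : ∀ α, strongH ρ α ≤ strongH (strongH ρ) α := strongH_le_strongH_strongH hρ
  refine ⟨funext fun α => le_antisymm ?_ ?_, funext fun α => le_antisymm ?_ ?_,
    funext fun α => le_antisymm ?_ ?_⟩
  · exact (key α).trans (strongH_mono hS (strongH_le_metricH hρ) α)
  · exact strongH_mono hM (metricH_le_self hρ) α
  · exact (key α).trans (strongH_le_metricH hS α)
  · exact metricH_le_self hS α
  · exact key α
  · exact strongH_mono hS (strongH_le_self hρ) α
end
end
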